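/- arXiv:1512.01333 — 2 statements merged into one kernel-verified Lean document; each statement's English description precedes it below -/
import Mathlib

section
/- Let T be a rooted tree with root v and branches T_1, ..., T_k, and let τ(S,x) = M_0(S,x)/M(S,x) for a rooted tree S. Then for the subdivision trees, τ(S(T), x) = 1 / (1 + Σ_{j=1}^k x/(1 + x·τ(S(T_j), x))) for all x > 0. -/
/-!
For every rooted tree with branches `Tⱼ` and `x ≥ 0`, `M₀(T) = ∏ⱼ M(Tⱼ)` and
`M₁(T) = x Σⱼ M₀(Tⱼ) ∏_{i≠j} M(Tᵢ)`, so `M₁/M₀ = x Σⱼ τ(Tⱼ)` and `τ(T) = 1 / (1 + x Σⱼ τ(Tⱼ))`.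
In `S(T)` the `j`-th branch of the root is a new vertex whose only branch is `S(Tⱼ)`, so the
recursion applied to it gives `τ = 1 / (1 + x τ(S(Tⱼ)))`; substituting into the recursion at the root
yields the formula.
-/

/-- A rooted tree: a root node together with a list of branches (rooted subtrees). -/
inductive RTree : Type
  | node : List RTree → RTree

namespace RTree

/-- Auxiliary fold: from the list of pairs `(M0 Tᵢ x, M Tᵢ x)` of the branches,
compute `(∏ᵢ M(Tᵢ,x), Σⱼ M0(Tⱼ,x) ∏_{i≠j} M(Tᵢ,x))`. -/
def comb : List (ℝ × ℝ) → ℝ × ℝ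
  | [] => (1, 0)
  | (m0, m) :: rest =>
    let pr := comb rest
    (m * pr.1, m0 * pr.1 + m * pr.2)

/-- `MM T x = (M₀(T,x), M₁(T,x))`: generating functions of matchings of `T`
not saturating / saturating the root. -/
def MM : RTree → ℝ → ℝ × ℝ
  | .node ts, x =>
    let pr := comb (ts.attach.map fun t =>
      let q := MM t.1 x
      (q.1, q.1 + q.2))
    (pr.1, x * pr.2)
  decreasing_by have := List.sizeOf_lt_of_mem t.2; simp only [RTree.node.sizeOf_spec]; omega

/-- Generating function of matchings not saturating the root. -/
def M0 (t : RTree) (x : ℝ) : ℝ := (MM t x).1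

/-- Generating function of matchings saturating the root. -/
def M1 (t : RTree) (x : ℝ) : ℝ := (MM t x).2

/-- The matching generating function `M(T,x) = M₀(T,x) + M₁(T,x)`. -/
def M (t : RTree) (x : ℝ) : ℝ := M0 t x + M1 t x

/-- `τ(T,x) = M₀(T,x)/M(T,x)`. -/
noncomputable def tau (t : RTree) (x : ℝ) : ℝ := M0 t x / M t x

/-- The subdivision tree: insert a new vertex in every edge. -/
def subdiv : RTree → RTree
  | .node ts => .node (ts.attach.map fun t => .node [subdiv t.1])
  decreasing_by have := List.sizeOf_lt_of_mem t.2; simp only [RTree.node.sizeOf_spec]; omega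

/-- Number of vertices. -/
def order : RTree → ℕ
  | .node ts => 1 + (ts.attach.map fun t => order t.1).sum
  decreasing_by have := List.sizeOf_lt_of_mem t.2; simp only [RTree.node.sizeOf_spec]; omega

end RTree

namespace RTree

lemma comb_fst (l : List (ℝ × ℝ)) : (comb l).1 = (l.map Prod.snd).prod := by
  induction l with
  | nil => rfl
  | cons p l ih => simp [comb, ih]

lemma comb_snd_nonneg (l : List (ℝ × ℝ)) (h : ∀ p ∈ l, 0 ≤ p.1 ∧ 0 ≤ p.2) :
    0 ≤ (comb l).2 := by
  induction l with
  | nil => exact le_rfl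
  | cons p l ih =>
    obtain ⟨h1, h2⟩ := h p List.mem_cons_self
    have hfst : 0 ≤ (comb l).1 :=
      comb_fst l ▸ List.prod_nonneg fun a ha => by
        obtain ⟨q, hq, rfl⟩ := List.mem_map.1 ha
        exact (h q (List.mem_cons_of_mem _ hq)).2
    have hsnd := ih fun q hq => h q (List.mem_cons_of_mem _ hq)
    simp only [comb]
    positivity

lemma comb_snd_div_fst (l : List (ℝ × ℝ)) (h : ∀ p ∈ l, p.2 ≠ 0) :
    (comb l).2 / (comb l).1 = (l.map fun p => p.1 / p.2).sum := by
  induction l with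
  | nil => simp [comb]
  | cons p l ih =>
    have hp := h p List.mem_cons_self
    have hfst : (comb l).1 ≠ 0 :=
      comb_fst l ▸ List.prod_ne_zero fun h0 => by
        obtain ⟨q, hq, hq0⟩ := List.mem_map.1 h0
        exact h q (List.mem_cons_of_mem _ hq) hq0
    rw [List.map_cons, List.sum_cons, ← ih fun q hq => h q (List.mem_cons_of_mem _ hq)]
    simp only [comb]
    field_simp

lemma subdiv_node (ts : List RTree) :
    subdiv (node ts) = node (ts.map fun t => node [subdiv t]) := by
  rw [subdiv]
  simp

lemma M0_node (ts : List RTree) (x : ℝ) : M0 (node ts) x = (ts.map fun t => M t x).prod := by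
  rw [M0, MM, comb_fst]
  simp [M, M0, M1, Function.comp_def]

lemma M1_node (ts : List RTree) (x : ℝ) :
    M1 (node ts) x = x * (comb (ts.map fun t => (M0 t x, M t x))).2 := by
  rw [M1, MM]
  simp [M, M0, M1]

theorem M0_pos_and_M1_nonneg (t : RTree) {x : ℝ} (hx : 0 ≤ x) : 0 < M0 t x ∧ 0 ≤ M1 t x := by
  obtain ⟨ts⟩ := t
  have ih : ∀ t ∈ ts, 0 < M0 t x ∧ 0 ≤ M1 t x := fun t ht => M0_pos_and_M1_nonneg t hx
  refine ⟨?_, ?_⟩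
  · rw [M0_node]
    refine List.prod_pos fun a ha => ?_
    obtain ⟨t, ht, rfl⟩ := List.mem_map.1 ha
    exact add_pos_of_pos_of_nonneg (ih t ht).1 (ih t ht).2
  · rw [M1_node]
    refine mul_nonneg hx (comb_snd_nonneg _ fun p hp => ?_)
    obtain ⟨t, ht, rfl⟩ := List.mem_map.1 hp
    exact ⟨(ih t ht).1.le, add_nonneg (ih t ht).1.le (ih t ht).2⟩
termination_by sizeOf t
decreasing_by simp only [node.sizeOf_spec]; have := List.sizeOf_lt_of_mem ht; omega

lemma M_pos (t : RTree) {x : ℝ} (hx : 0 ≤ x) : 0 < M t x :=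
  add_pos_of_pos_of_nonneg (M0_pos_and_M1_nonneg t hx).1 (M0_pos_and_M1_nonneg t hx).2

theorem tau_node (ts : List RTree) {x : ℝ} (hx : 0 ≤ x) :
    tau (node ts) x = 1 / (1 + x * (ts.map fun t => tau t x).sum) := by
  have hM0 := (M0_pos_and_M1_nonneg (node ts) hx).1
  have hratio : M1 (node ts) x / M0 (node ts) x = x * (ts.map fun t => tau t x).sum := by
    have hprod : (ts.map fun t => M t x).prod = (comb (ts.map fun t => (M0 t x, M t x))).1 := by
      rw [comb_fst, List.map_map]
      rfl
    rw [M1_node, M0_node, hprod, mul_div_assoc, comb_snd_div_fst _ fun p hp => ?_, List.map_map]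
    · rfl
    · obtain ⟨t, -, rfl⟩ := List.mem_map.1 hp
      exact (M_pos t hx).ne'
  rw [← hratio, tau, M]
  field_simp

lemma tau_node_singleton (s : RTree) {x : ℝ} (hx : 0 ≤ x) :
    tau (node [s]) x = 1 / (1 + x * tau s x) := by
  simpa using tau_node [s] hx

end RTree

open RTree in
/-- Lemma 2.3(11): for a rooted tree `T` with branches `ts` and `x > 0`,
`τ(S(T),x) = 1 / (1 + Σⱼ x/(1 + x·τ(S(Tⱼ),x)))`. -/
theorem tau_subdiv_node (ts : List RTree) (x : ℝ) (hx : 0 < x) :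
    tau (subdiv (RTree.node ts)) x =
      1 / (1 + (ts.map fun t => x / (1 + x * tau (subdiv t) x)).sum) := by
  rw [subdiv_node, tau_node _ hx.le, List.map_map, ← List.sum_map_mul_left]
  simp only [Function.comp_def, tau_node_singleton _ hx.le, mul_one_div]
end

section
/- For any tree T on n vertices, the Laplacian characteristic polynomial satisfies L(T, λ²) = λ · A(S(T), λ), where A(S(T), λ) is the adjacency characteristic polynomial of the subdivision tree S(T). Consequently, the adjacency eigenvalues of S(T) are ±√μ_1, ..., ±√μ_{n-1}, 0, where μ_1 ≥ ... ≥ μ_{n-1} ≥ μ_n = 0 are the Laplacian eigenvalues of T. -/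
open scoped Classical

variable {V : Type*}

/-- Degree of a vertex. -/
noncomputable def vdeg (G : SimpleGraph V) (v : V) : ℕ := (G.neighborSet v).ncard

/-- The subdivision graph `S(G)`: insert a new vertex in every edge of `G`.
Its vertices are the vertices of `G` together with the edges of `G`, and a vertex
`v` is adjacent to an edge `e` iff `v` is an endpoint of `e` in `G`. -/
def subdivision (G : SimpleGraph V) : SimpleGraph (V ⊕ G.edgeSet) where
  Adj a b :=
    (∃ v e, a = Sum.inl v ∧ b = Sum.inr e ∧ v ∈ (e : Sym2 V)) ∨
      (∃ v e, b = Sum.inl v ∧ a = Sum.inr e ∧ v ∈ (e : Sym2 V))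
  symm := ⟨fun a b h => Or.symm h⟩
  loopless := ⟨fun a => by rintro (⟨v, e, rfl, h, -⟩ | ⟨v, e, rfl, h, -⟩) <;> simp at h⟩

/-- A set of edges of `G` forms a matching: pairwise disjoint edges. -/
def IsMatchingSet (G : SimpleGraph V) (s : Set (Sym2 V)) : Prop :=
  s ⊆ G.edgeSet ∧ s.Pairwise fun e f => ∀ v, v ∈ e → v ∉ f

/-- `matchCount G k` is the number `m(G,k)` of `k`-edge matchings of `G`. -/
noncomputable def matchCount (G : SimpleGraph V) (k : ℕ) : ℕ :=
  {s : Set (Sym2 V) | IsMatchingSet G s ∧ s.ncard = k}.ncard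

/-- The matching generating function `M(G,x) = Σ_k m(G,k) x^k`. -/
noncomputable def matchGen (G : SimpleGraph V) [Fintype V] (x : ℝ) : ℝ :=
  ∑ k ∈ Finset.range (Fintype.card V + 1), (matchCount G k : ℝ) * x ^ k

/-- The Laplacian matrix `D(G) - A(G)` (over ℝ). -/
noncomputable def lapM (G : SimpleGraph V) [Fintype V] : Matrix V V ℝ :=
  Matrix.of fun i j =>
    if i = j then (vdeg G i : ℝ) else if G.Adj i j then -1 else 0

/-- The adjacency matrix (over ℝ). -/
noncomputable def adjM (G : SimpleGraph V) [Fintype V] : Matrix V V ℝ :=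
  Matrix.of fun i j => if G.Adj i j then 1 else 0

/-- The signless Laplacian matrix `D(G) + A(G)` (over ℝ). -/
noncomputable def signlessLapM (G : SimpleGraph V) [Fintype V] : Matrix V V ℝ :=
  Matrix.of fun i j =>
    if i = j then (vdeg G i : ℝ) else if G.Adj i j then 1 else 0

lemma adjM_isHermitian (G : SimpleGraph V) [Fintype V] :
    (adjM G).IsHermitian := by
  unfold Matrix.IsHermitian
  ext i j
  simp only [Matrix.conjTranspose_apply, adjM, Matrix.of_apply, star_trivial]
  rw [SimpleGraph.adj_comm]

lemma lapM_isHermitian (G : SimpleGraph V) [Fintype V] :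
    (lapM G).IsHermitian := by
  unfold Matrix.IsHermitian
  ext i j
  simp only [Matrix.conjTranspose_apply, lapM, Matrix.of_apply, star_trivial]
  by_cases h : i = j
  · subst h; rfl
  · simp only [h, Ne.symm h, if_false]
    rw [SimpleGraph.adj_comm]

lemma signlessLapM_isHermitian (G : SimpleGraph V) [Fintype V] :
    (signlessLapM G).IsHermitian := by
  unfold Matrix.IsHermitian
  ext i j
  simp only [Matrix.conjTranspose_apply, signlessLapM, Matrix.of_apply, star_trivial]
  by_cases h : i = j
  · subst h; rfl
  · simp only [h, Ne.symm h, if_false]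
    rw [SimpleGraph.adj_comm]

/-- The `k`-th Laplacian coefficient `c_k(G)`:
`det(λI - L(G)) = Σ_k (-1)^k c_k(G) λ^{n-k}`. -/
noncomputable def lapCoeff (G : SimpleGraph V) [Fintype V] (k : ℕ) : ℝ :=
  (-1) ^ k * (lapM G).charpoly.coeff (Fintype.card V - k)

/-- The Laplacian coefficient generating function `φ(G,x) = Σ_{k=0}^{n-1} c_k(G) x^k`. -/
noncomputable def lapGen (G : SimpleGraph V) [Fintype V] (x : ℝ) : ℝ :=
  ∑ k ∈ Finset.range (Fintype.card V), lapCoeff G k * x ^ k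

/-- The graph energy: sum of the absolute values of the adjacency eigenvalues. -/
noncomputable def energy (G : SimpleGraph V) [Fintype V] : ℝ :=
  ∑ i, |(adjM_isHermitian G).eigenvalues i|

/-- The Laplacian-energy-like invariant: sum of the square roots of the
Laplacian eigenvalues. -/
noncomputable def LEL (G : SimpleGraph V) [Fintype V] : ℝ :=
  ∑ i, Real.sqrt ((lapM_isHermitian G).eigenvalues i)

/-- The incidence energy: sum of the singular values of the incidence matrix,
i.e. the sum of the square roots of the signless Laplacian eigenvalues. -/
noncomputable def IE (G : SimpleGraph V) [Fintype V] : ℝ :=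
  ∑ i, Real.sqrt ((signlessLapM_isHermitian G).eigenvalues i)

/-- Hosoya index `Z(G) = Σ_k m(G,k)`. -/
noncomputable def hosoya (G : SimpleGraph V) [Fintype V] : ℕ :=
  ∑ k ∈ Finset.range (Fintype.card V + 1), matchCount G k

/-- The children of `v` in the tree `T` rooted at `v₀`. -/
def rchildren (T : SimpleGraph V) (v₀ v : V) : Set V :=
  {u | T.Adj v u ∧ T.dist v₀ u = T.dist v₀ v + 1}

/-- In the tree `T` rooted at `v₀`, the subtree hanging at `u` is a complete
`d`-ary tree: for some height `h`, every descendant of `u` at distance `< h`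
from `u` has exactly `d` children and every other descendant has none. -/
def IsCompleteAry (T : SimpleGraph V) (v₀ : V) (d : ℕ) (u : V) : Prop :=
  ∃ h : ℕ, ∀ w, T.dist v₀ w = T.dist v₀ u + T.dist u w →
    (rchildren T v₀ w).ncard = if T.dist u w < h then d else 0

/-- `T` is the greedy tree with maximum degree `Δ` (Definition 1.2, with
`Δ = d+1`): `T` is a tree having a root `v₀` of degree `Δ` such that the heights
of any two pendent vertices differ by at most one, and for every vertex at most
one child-subtree fails to be a complete `(Δ-1)`-ary tree. -/
def IsGreedyTree (Δ : ℕ) (T : SimpleGraph V) : Prop :=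
  T.IsTree ∧ ∃ v₀ : V,
    vdeg T v₀ = Δ ∧
    (∀ u w : V, vdeg T u = 1 → vdeg T w = 1 → T.dist v₀ u ≤ T.dist v₀ w + 1) ∧
    ∀ v : V, {u | u ∈ rchildren T v₀ v ∧ ¬ IsCompleteAry T v₀ (Δ - 1) u}.Subsingleton

/-!
The adjacency matrix of `S(T)` is the block matrix `[[0, B], [Bᵀ, 0]]`, where `B` is the
vertex–edge incidence matrix of `T`, and `B Bᵀ = D + A` is the signless Laplacian. Multiplying
`λI - [[0, B], [Bᵀ, 0]]` on the right by `[[λI, 0], [Bᵀ, I]]` makes it block triangular with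
diagonal blocks `λ²I - B Bᵀ` and `λI`, so `λⁿ 𝓐(S(T), λ) = λⁿ⁻¹ 𝓠(T, λ²)` with `𝓠` the
characteristic polynomial of `D + A`. A tree is bipartite, and conjugating by the diagonal `±1`
matrix of a 2-colouring turns `D + A` into `D - A`, so `𝓠 = 𝓛`. At `r = 0` both root conditions
hold, since `𝓛(T, λ²)` has no linear term.
-/

section

open Polynomial Matrix

namespace Matrix

variable {R : Type*} [CommRing R] {m n : Type*} [Fintype m] [Fintype n] [DecidableEq m]
  [DecidableEq n]

theorem charpoly_comp (A : Matrix n n R) (p : R[X]) :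
    A.charpoly.comp p = (scalar n p - A.map C).det := by
  rw [charpoly, ← coe_compRingHom_apply, RingHom.map_det]
  congr 1
  ext i j
  by_cases h : i = j
  · subst h; simp [charmatrix_apply_eq]
  · simp [h]

theorem X_pow_mul_charpoly_fromBlocks_zero₁₁_zero₂₂ (A : Matrix m n R) (B : Matrix n m R) :
    X ^ Fintype.card m * (fromBlocks 0 A B 0).charpoly =
      X ^ Fintype.card n * (A * B).charpoly.comp (X ^ 2) := by
  set N : Matrix (m ⊕ n) (m ⊕ n) R[X] := fromBlocks (scalar m X) 0 (B.map C) 1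
  have hN : N.det = X ^ Fintype.card m := by simp [N]
  have hMN : charmatrix (fromBlocks 0 A B 0) * N =
      fromBlocks (scalar m (X ^ 2) - (A * B).map C) (-A.map C) 0 (scalar n X) := by
    have hX : scalar n (X : R[X]) * B.map C = B.map C * scalar m X :=
      (smul_eq_diagonal_mul _ X).symm.trans (smul_eq_mul_diagonal _ X)
    rw [charmatrix_fromBlocks, charmatrix_zero, charmatrix_zero, fromBlocks_multiply, hX]
    simp only [scalar_apply, diagonal_mul_diagonal, Matrix.neg_mul, Matrix.mul_zero,
      Matrix.mul_one, zero_add, mul_one, pow_two, Matrix.map_mul, sub_eq_add_neg, fromBlocks_inj,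
      and_true, true_and]
    -- the two summands agree only up to unfolding instances, which `simp` does not see
    exact neg_add_cancel _
  rw [← hN, mul_comm, charpoly, ← det_mul, hMN, det_fromBlocks_zero₂₁, charpoly_comp]
  simp [mul_comm]

end Matrix

theorem Polynomial.isRoot_iff_isRoot_sq_of_comp_X_sq_eq_X_mul {K : Type*} [CommRing K]
    [IsDomain K] {p q : K[X]} (h : p.comp (X ^ 2) = X * q) (r : K) :
    q.IsRoot r ↔ p.IsRoot (r ^ 2) := by
  have heval : p.eval (r ^ 2) = r * q.eval r := by
    simpa [eval_comp] using congrArg (eval r) h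
  by_cases hr : r = 0
  · subst hr
    have hq : q.coeff 0 = 0 := by
      simpa [← expand_eq_comp_X_pow, coeff_expand two_pos] using (congrArg (coeff · 1) h).symm
    simp_all [IsRoot, coeff_zero_eq_eval_zero]
  · simp [IsRoot, heval, hr]

variable {V : Type*}

lemma vdeg_eq_degree (G : SimpleGraph V) [Fintype V] (v : V) : vdeg G v = G.degree v := by
  rw [vdeg, Set.ncard_eq_toFinset_card']
  rfl

noncomputable def edgeIncMatrix (G : SimpleGraph V) : Matrix V G.edgeSet ℝ :=
  (G.incMatrix ℝ).submatrix id Subtype.val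

lemma adjM_subdivision [Fintype V] (G : SimpleGraph V) :
    adjM (subdivision G) = fromBlocks 0 (edgeIncMatrix G) (edgeIncMatrix G)ᵀ 0 := by
  ext (v | e) (w | f) <;>
    simp [adjM, subdivision, edgeIncMatrix, SimpleGraph.incMatrix_apply', SimpleGraph.incidenceSet]

lemma edgeIncMatrix_mul_transpose [Fintype V] (G : SimpleGraph V) :
    edgeIncMatrix G * (edgeIncMatrix G)ᵀ = signlessLapM G := by
  have hinc : edgeIncMatrix G * (edgeIncMatrix G)ᵀ = G.incMatrix ℝ * (G.incMatrix ℝ)ᵀ := by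
    ext v w
    simp only [mul_apply, edgeIncMatrix, submatrix_apply, transpose_apply, id]
    rw [Finset.sum_set_coe (f := fun e => G.incMatrix ℝ v e * G.incMatrix ℝ w e)]
    refine Finset.sum_subset (Finset.subset_univ _) fun e _ he => ?_
    rw [G.incMatrix_of_notMem_incidenceSet fun h => he (Set.mem_toFinset.2 h.1), zero_mul]
  rw [hinc, SimpleGraph.incMatrix_mul_transpose]
  ext v w
  simp [signlessLapM, vdeg_eq_degree]

lemma signlessLapM_eq_diagonal_mul_lapM_mul_diagonal [Fintype V] {G : SimpleGraph V}
    (c : G.Coloring (Fin 2)) :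
    signlessLapM G = diagonal (fun v => (-1 : ℝ) ^ (c v : ℕ)) * lapM G *
      diagonal (fun v => (-1 : ℝ) ^ (c v : ℕ)) := by
  ext i j
  simp only [diagonal_mul, mul_diagonal, lapM, signlessLapM, of_apply]
  split_ifs with hij hadj
  · subst hij
    rw [mul_right_comm, ← mul_pow, neg_one_mul, neg_neg, one_pow, one_mul]
  · have hne := c.valid hadj
    generalize c i = a, c j = b at hne
    fin_cases a <;> fin_cases b <;> simp_all
  · simp

lemma SimpleGraph.IsBipartite.charpoly_signlessLapM [Fintype V] {G : SimpleGraph V}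
    (hG : G.IsBipartite) : (signlessLapM G).charpoly = (lapM G).charpoly := by
  obtain ⟨c⟩ := hG
  rw [signlessLapM_eq_diagonal_mul_lapM_mul_diagonal c, charpoly_mul_comm, ← mul_assoc,
    diagonal_mul_diagonal]
  simp [← pow_add]

end

open Polynomial in
/-- For any tree `T` on `n` vertices, `𝓛(T, λ²) = λ · 𝓐(S(T), λ)`, where `𝓛` is
the Laplacian characteristic polynomial of `T` and `𝓐` the adjacency
characteristic polynomial of the subdivision tree `S(T)`.  Consequently the
adjacency eigenvalues of `S(T)` are exactly the numbers `r` with `r²` a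
Laplacian eigenvalue of `T` (i.e. `±√μ₁, …, ±√μ_{n-1}, 0`). -/
theorem lap_charpoly_comp_sq {V : Type*} [Fintype V]
    (T : SimpleGraph V) (hT : T.IsTree) :
    (lapM T).charpoly.comp (X ^ 2) = X * (adjM (subdivision T)).charpoly ∧
    ∀ r : ℝ, (adjM (subdivision T)).charpoly.IsRoot r ↔
      (lapM T).charpoly.IsRoot (r ^ 2) := by
  have hcard : Fintype.card T.edgeSet + 1 = Fintype.card V := by
    rw [← hT.card_edgeFinset, SimpleGraph.edgeFinset_card]
  have hblock := Matrix.X_pow_mul_charpoly_fromBlocks_zero₁₁_zero₂₂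
    (edgeIncMatrix T) (edgeIncMatrix T).transpose
  rw [← adjM_subdivision, edgeIncMatrix_mul_transpose, hT.isBipartite.charpoly_signlessLapM,
    ← hcard, pow_succ, mul_assoc] at hblock
  have hcomp : (lapM T).charpoly.comp (X ^ 2) = X * (adjM (subdivision T)).charpoly :=
    ((isRegular_X_pow _).left.eq_iff.mp hblock).symm
  exact ⟨hcomp, isRoot_iff_isRoot_sq_of_comp_X_sq_eq_X_mul hcomp⟩
end
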